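/- Let M(ξ) be the deformed ASEP transition matrix on (ℂ^2)^{⊗N} and let U_GC be the diagonal matrix defined as the tensor product of diag(1, (δ/β)(q/p)^{N-i}) over sites i = 1,…,N. Then M(ξ') = U_GC M(ξ)^T U_GC^{-1}, where ξ' = (γδ/(αβ))(q/p)^{N-1} ξ^{-1}. Consequently M(ξ) and M(ξ') have the same spectrum. -/

import Mathlib

open Matrix Finset

/-- Embed a one-site (2×2) matrix at site `i` of the lattice `(ℂ²)^{⊗N}`. -/
noncomputable def siteOp {N : ℕ} (A : Matrix (Fin 2) (Fin 2) ℂ) (i : Fin N) :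
    Matrix (Fin N → Fin 2) (Fin N → Fin 2) ℂ :=
  fun τ τ' => A (τ i) (τ' i) * (if ∀ j, j ≠ i → τ j = τ' j then 1 else 0)

/-- Embed a two-site (4×4) matrix at sites `i, i'` of the lattice `(ℂ²)^{⊗N}`. -/
noncomputable def siteOp2 {N : ℕ} (A : Matrix (Fin 2 × Fin 2) (Fin 2 × Fin 2) ℂ)
    (i i' : Fin N) : Matrix (Fin N → Fin 2) (Fin N → Fin 2) ℂ :=
  fun τ τ' => A (τ i, τ i') (τ' i, τ' i')
    * (if ∀ j, j ≠ i → j ≠ i' → τ j = τ' j then 1 else 0)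

/-- Left boundary matrix `√(αγ) B(ξ) = [[-α, ξ⁻¹γ], [ξα, -γ]]`. -/
noncomputable def Bleft (α γ ξ : ℂ) : Matrix (Fin 2) (Fin 2) ℂ :=
  !![-α, ξ⁻¹ * γ; ξ * α, -γ]

/-- Right boundary matrix `√(βδ) B̄ = [[-δ, β], [δ, -β]]`. -/
noncomputable def Bright (β δ : ℂ) : Matrix (Fin 2) (Fin 2) ℂ :=
  !![-δ, β; δ, -β]

/-- Bulk hopping matrix `√(pq) w` on ℂ² ⊗ ℂ² (product basis): nonzero entries
`(01,01) = -q`, `(01,10) = p`, `(10,01) = q`, `(10,10) = -p`. -/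
noncomputable def wBulk (p q : ℂ) : Matrix (Fin 2 × Fin 2) (Fin 2 × Fin 2) ℂ :=
  Matrix.single (0, 1) (0, 1) (-q) + Matrix.single (0, 1) (1, 0) p
    + Matrix.single (1, 0) (0, 1) q + Matrix.single (1, 0) (1, 0) (-p)

/-- The deformed ASEP transition matrix `M(ξ)` on a lattice of `N = n+1` sites:
`M(ξ) = √(αγ) B₁(ξ) + Σ_{i=1}^{N-1} √(pq) w_{i,i+1} + √(βδ) B̄_N`. -/
noncomputable def Masep (n : ℕ) (p q α β γ δ ξ : ℂ) :
    Matrix (Fin (n + 1) → Fin 2) (Fin (n + 1) → Fin 2) ℂ :=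
  siteOp (Bleft α γ ξ) 0 + (∑ i : Fin n, siteOp2 (wBulk p q) i.castSucc i.succ)
    + siteOp (Bright β δ) (Fin.last n)

/-- The Gallavotti–Cohen conjugation matrix
`U_GC = ⊗_{i=1}^N diag(1, (δ/β)(q/p)^{N-i})`. -/
noncomputable def Ugc (n : ℕ) (p q β δ : ℂ) :
    Matrix (Fin (n + 1) → Fin 2) (Fin (n + 1) → Fin 2) ℂ :=
  Matrix.diagonal fun τ =>
    ∏ i : Fin (n + 1), if τ i = 1 then (δ / β) * (q / p) ^ (n - (i : ℕ)) else 1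

/-!
The matrix `U_GC` is diagonal in the occupation basis with product-state entries
`∏ᵢ gᵢ(τᵢ)`. Conjugation by such a matrix acts on each local term separately, so it
suffices to check `A' · diag(g) = diag(g) · Aᵀ` for each one-site and two-site block:
for the left boundary this forces the value of `ξ'`, for the bulk it needs
`g_{i+1}(1) · (q/p) = g_i(1)`, and for the right boundary `g_N(1) = δ/β`.
The spectral statement follows because transposition and conjugation preserve spectra.
-/

namespace Matrix

variable {R m : Type*} [CommRing R] [Fintype m] [DecidableEq m]

theorem spectrum_transpose (M : Matrix m m R) : spectrum R Mᵀ = spectrum R M := by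
  ext μ
  rw [spectrum.mem_iff, spectrum.mem_iff, ← isUnit_transpose, transpose_sub,
    algebraMap_eq_diagonal, diagonal_transpose, transpose_transpose]

theorem spectrum_mul_mul_nonsing_inv {U : Matrix m m R} (hU : IsUnit U.det)
    (B : Matrix m m R) : spectrum R (U * B * U⁻¹) = spectrum R B :=
  spectrum.units_conjugate (u := nonsingInvUnit U hU)

end Matrix

noncomputable def tensorDiagonal {N : ℕ} (g : Fin N → Fin 2 → ℂ) :
    Matrix (Fin N → Fin 2) (Fin N → Fin 2) ℂ :=
  diagonal fun τ => ∏ j, g j (τ j)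

theorem prod_eq_prod_mul_prod_compl_of_eqOn_compl {N : ℕ} (g : Fin N → Fin 2 → ℂ)
    (s : Finset (Fin N)) {τ τ' : Fin N → Fin 2} (h : ∀ j ∉ s, τ j = τ' j) :
    ∏ j, g j (τ j) = (∏ j ∈ s, g j (τ j)) * ∏ j ∈ sᶜ, g j (τ' j) := by
  rw [← prod_mul_prod_compl s]
  exact congrArg _ (prod_congr rfl fun j hj => by rw [h j (mem_compl.mp hj)])

theorem siteOp_mul_tensorDiagonal {N : ℕ} (g : Fin N → Fin 2 → ℂ)
    {A A' : Matrix (Fin 2) (Fin 2) ℂ} (i : Fin N)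
    (h : A' * diagonal (g i) = diagonal (g i) * Aᵀ) :
    siteOp A' i * tensorDiagonal g = tensorDiagonal g * (siteOp A i)ᵀ := by
  ext τ τ'
  have hloc := congrFun (congrFun h (τ i)) (τ' i)
  simp only [mul_diagonal, diagonal_mul, transpose_apply] at hloc
  simp only [tensorDiagonal, mul_diagonal, diagonal_mul, transpose_apply, siteOp]
  by_cases hc : ∀ j, j ≠ i → τ j = τ' j
  · have hc' : ∀ j, j ≠ i → τ' j = τ j := fun j hj => (hc j hj).symm
    have hoff : ∀ j ∉ ({i} : Finset (Fin N)), τ j = τ' j :=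
      fun j hj => hc j (notMem_singleton.mp hj)
    rw [if_pos hc, if_pos hc', prod_eq_prod_mul_prod_compl_of_eqOn_compl g {i} hoff,
      prod_eq_prod_mul_prod_compl_of_eqOn_compl g {i} (τ := τ') fun _ _ => rfl,
      prod_singleton, prod_singleton]
    linear_combination (∏ j ∈ {i}ᶜ, g j (τ' j)) * hloc
  · have hc' : ¬ ∀ j, j ≠ i → τ' j = τ j := fun h' => hc fun j hj => (h' j hj).symm
    simp only [if_neg hc, if_neg hc', mul_zero, zero_mul]

theorem siteOp2_mul_tensorDiagonal {N : ℕ} (g : Fin N → Fin 2 → ℂ)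
    {A A' : Matrix (Fin 2 × Fin 2) (Fin 2 × Fin 2) ℂ} {i i' : Fin N} (hii' : i ≠ i')
    (h : A' * diagonal (fun x => g i x.1 * g i' x.2)
      = diagonal (fun x => g i x.1 * g i' x.2) * Aᵀ) :
    siteOp2 A' i i' * tensorDiagonal g = tensorDiagonal g * (siteOp2 A i i')ᵀ := by
  ext τ τ'
  have hloc := congrFun (congrFun h (τ i, τ i')) (τ' i, τ' i')
  simp only [mul_diagonal, diagonal_mul, transpose_apply] at hloc
  simp only [tensorDiagonal, mul_diagonal, diagonal_mul, transpose_apply, siteOp2]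
  by_cases hc : ∀ j, j ≠ i → j ≠ i' → τ j = τ' j
  · have hc' : ∀ j, j ≠ i → j ≠ i' → τ' j = τ j := fun j hj hj' => (hc j hj hj').symm
    have hoff : ∀ j ∉ ({i, i'} : Finset (Fin N)), τ j = τ' j := fun j hj => by
      simp only [mem_insert, mem_singleton, not_or] at hj
      exact hc j hj.1 hj.2
    rw [if_pos hc, if_pos hc', prod_eq_prod_mul_prod_compl_of_eqOn_compl g _ hoff,
      prod_eq_prod_mul_prod_compl_of_eqOn_compl g {i, i'} (τ := τ') fun _ _ => rfl,
      prod_pair hii', prod_pair hii']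
    linear_combination (∏ j ∈ {i, i'}ᶜ, g j (τ' j)) * hloc
  · have hc' : ¬ ∀ j, j ≠ i → j ≠ i' → τ' j = τ j :=
      fun h' => hc fun j hj hj' => (h' j hj hj').symm
    simp only [if_neg hc, if_neg hc', mul_zero, zero_mul]

theorem Bleft_mul_diagonal {α γ r : ℂ} (hα : α ≠ 0) (hγ : γ ≠ 0) (hr : r ≠ 0) (ξ : ℂ) :
    Bleft α γ (γ * r / α * ξ⁻¹) * diagonal ![1, r] = diagonal ![1, r] * (Bleft α γ ξ)ᵀ := by
  ext a b
  fin_cases a <;> fin_cases b <;> simp [Bleft] <;> field_simp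

theorem Bright_mul_diagonal {β : ℂ} (hβ : β ≠ 0) (δ : ℂ) :
    Bright β δ * diagonal ![1, δ / β] = diagonal ![1, δ / β] * (Bright β δ)ᵀ := by
  ext a b
  fin_cases a <;> fin_cases b <;> simp [Bright] <;> field_simp

theorem wBulk_mul_diagonal (p q : ℂ) {u v : Fin 2 → ℂ}
    (h : p * (u 1 * v 0) = q * (u 0 * v 1)) :
    wBulk p q * diagonal (fun x => u x.1 * v x.2)
      = diagonal (fun x => u x.1 * v x.2) * (wBulk p q)ᵀ := by
  ext ⟨a, b⟩ ⟨a', b'⟩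
  fin_cases a <;> fin_cases b <;> fin_cases a' <;> fin_cases b' <;>
    simp [wBulk, Matrix.single] <;> grind

noncomputable def gcWeight (n : ℕ) (p q β δ : ℂ) (i : Fin (n + 1)) : Fin 2 → ℂ :=
  ![1, δ / β * (q / p) ^ (n - (i : ℕ))]

theorem Ugc_eq_tensorDiagonal (n : ℕ) (p q β δ : ℂ) :
    Ugc n p q β δ = tensorDiagonal (gcWeight n p q β δ) := by
  refine congrArg diagonal (funext fun τ => prod_congr rfl fun i _ => ?_)
  generalize τ i = x
  fin_cases x <;> simp [gcWeight]

theorem isUnit_det_Ugc (n : ℕ) {p q β δ : ℂ} (hp : p ≠ 0) (hq : q ≠ 0) (hβ : β ≠ 0)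
    (hδ : δ ≠ 0) : IsUnit (Ugc n p q β δ).det := by
  rw [Ugc_eq_tensorDiagonal, tensorDiagonal, det_diagonal, isUnit_iff_ne_zero]
  refine prod_ne_zero_iff.mpr fun τ _ => prod_ne_zero_iff.mpr fun i _ => ?_
  generalize τ i = x
  fin_cases x <;> simp [gcWeight, hp, hq, hβ, hδ]

theorem gcWeight_zero (n : ℕ) (p q β δ : ℂ) :
    gcWeight n p q β δ 0 = ![1, δ / β * (q / p) ^ n] := by
  simp [gcWeight]

theorem gcWeight_last (n : ℕ) (p q β δ : ℂ) :
    gcWeight n p q β δ (Fin.last n) = ![1, δ / β] := by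
  simp [gcWeight]

theorem gcWeight_bulk (n : ℕ) {p : ℂ} (hp : p ≠ 0) (q β δ : ℂ) (i : Fin n) :
    p * (gcWeight n p q β δ i.castSucc 1 * gcWeight n p q β δ i.succ 0)
      = q * (gcWeight n p q β δ i.castSucc 0 * gcWeight n p q β δ i.succ 1) := by
  have hk : n - (i : ℕ) = n - ((i : ℕ) + 1) + 1 := by omega
  simp only [gcWeight, Fin.val_castSucc, Fin.val_succ, hk, pow_succ]
  simp only [Matrix.cons_val_one, Matrix.cons_val_zero]
  field_simp

theorem Masep_mul_Ugc (n : ℕ) {p q α β γ δ : ℂ} (hp : p ≠ 0) (hq : q ≠ 0) (hα : α ≠ 0)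
    (hβ : β ≠ 0) (hγ : γ ≠ 0) (hδ : δ ≠ 0) (ξ : ℂ) :
    Masep n p q α β γ δ (γ * δ / (α * β) * (q / p) ^ n * ξ⁻¹) * Ugc n p q β δ
      = Ugc n p q β δ * (Masep n p q α β γ δ ξ)ᵀ := by
  have hr : δ / β * (q / p) ^ n ≠ 0 := by simp [hp, hq, hβ, hδ]
  have hξ' : γ * δ / (α * β) * (q / p) ^ n * ξ⁻¹ = γ * (δ / β * (q / p) ^ n) / α * ξ⁻¹ := by
    ring
  have hleft := Bleft_mul_diagonal hα hγ hr ξ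
  rw [← gcWeight_zero n p q β δ] at hleft
  have hright := Bright_mul_diagonal hβ δ
  rw [← gcWeight_last n p q β δ] at hright
  simp only [Masep, Ugc_eq_tensorDiagonal, hξ', add_mul, mul_add, transpose_add,
    transpose_sum, sum_mul, mul_sum]
  congr 1
  congr 1
  · exact siteOp_mul_tensorDiagonal _ 0 hleft
  · exact sum_congr rfl fun i _ => siteOp2_mul_tensorDiagonal _ Fin.castSucc_lt_succ.ne
      (wBulk_mul_diagonal p q (gcWeight_bulk n hp q β δ i))
  · exact siteOp_mul_tensorDiagonal _ (Fin.last n) hright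

theorem stmt7_general (n : ℕ) (p q α β γ δ ξ : ℂ)
    (hp : p ≠ 0) (hq : q ≠ 0) (hα : α ≠ 0) (hβ : β ≠ 0) (hγ : γ ≠ 0) (hδ : δ ≠ 0) :
    Masep n p q α β γ δ (γ * δ / (α * β) * (q / p) ^ n * ξ⁻¹)
        = Ugc n p q β δ * (Masep n p q α β γ δ ξ)ᵀ * (Ugc n p q β δ)⁻¹
      ∧ spectrum ℂ (Masep n p q α β γ δ (γ * δ / (α * β) * (q / p) ^ n * ξ⁻¹))
        = spectrum ℂ (Masep n p q α β γ δ ξ) := by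
  have hU := isUnit_det_Ugc n hp hq hβ hδ
  have hconj : Masep n p q α β γ δ (γ * δ / (α * β) * (q / p) ^ n * ξ⁻¹)
      = Ugc n p q β δ * (Masep n p q α β γ δ ξ)ᵀ * (Ugc n p q β δ)⁻¹ := by
    rw [← Masep_mul_Ugc n hp hq hα hβ hγ hδ ξ, mul_nonsing_inv_cancel_right _ _ hU]
  refine ⟨hconj, ?_⟩
  rw [hconj, spectrum_mul_mul_nonsing_inv hU, spectrum_transpose]

/-- Gallavotti–Cohen symmetry: `M(ξ') = U_GC M(ξ)ᵀ U_GC⁻¹` with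
`ξ' = (γδ/(αβ))(q/p)^{N-1} ξ⁻¹`; consequently `M(ξ)` and `M(ξ')` have the same
spectrum. -/
theorem stmt7 (n : ℕ) (p q α β γ δ ξ : ℂ)
    (hp : p ≠ 0) (hq : q ≠ 0) (hα : α ≠ 0) (hβ : β ≠ 0) (hγ : γ ≠ 0) (hδ : δ ≠ 0)
    (hξ : ξ ≠ 0) :
    Masep n p q α β γ δ (γ * δ / (α * β) * (q / p) ^ n * ξ⁻¹)
        = Ugc n p q β δ * (Masep n p q α β γ δ ξ)ᵀ * (Ugc n p q β δ)⁻¹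
      ∧ spectrum ℂ (Masep n p q α β γ δ (γ * δ / (α * β) * (q / p) ^ n * ξ⁻¹))
        = spectrum ℂ (Masep n p q α β γ δ ξ) :=
  stmt7_general n p q α β γ δ ξ hp hq hα hβ hγ hδ
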